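/- Let X₁, X₂, Y₁, Y₂ be Banach spaces, G₁ ∈ L(X₁,Y₁) and G₂ ∈ L(X₂,Y₂) norm-one operators, and let G : X₁ ⊕_∞ X₂ → Y₁ ⊕_∞ Y₂ be the diagonal operator G(x₁,x₂) = (G₁x₁, G₂x₂). Then n_G(X₁ ⊕_∞ X₂, Y₁ ⊕_∞ Y₂) = min { n_{G₁}(X₁,Y₁), n_{G₂}(X₂,Y₂) }. -/

import Mathlib

/-!
For a unit vector `u`, Hahn–Banach applied to the sublinear functional
`τ(u, z) = lim_{t ↓ 0} (‖u + t z‖ - ‖u‖) / t` gives `vRad u z = max (τ(u, z), τ(u, -z))`,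
so the numerical radius only depends on the norms `‖u + t z‖`, `t ∈ ℝ`.

Upper bound: `(A, B) ↦ A.prodMap B` is an isometry for the sup norms, and in a product
`τ((u₁, u₂), (z, 0)) = max (τ(u₁, z), 0)` when `‖u₁‖ = ‖u₂‖`, so `vRad G (z.prodMap 0) = vRad G₁ z`.

Lower bound: given a unit `T` and `x` in the unit ball with, say, `‖(T x).1‖` large, convexity lets
us replace `x.1` by a unit vector `e`; with `f` norming `e`, the compression `S = P₁ T J`,
`J w = (w, f w • x.2)`, satisfies `P₁ G J = G₁` and `‖G₁ + t S‖ ≤ ‖G + t T‖` for all `t`, hence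
`vRad G T ≥ vRad G₁ S ≥ n(G₁) ‖S‖ ≥ n(G₁) ‖(T x).1‖`.
-/

open NormedSpace

/-- Numerical radius of `z` with respect to the unit vector `u`. -/
noncomputable def vRad {Z : Type*} [NormedAddCommGroup Z] [NormedSpace ℝ Z] (u z : Z) : ℝ :=
  sSup {r : ℝ | ∃ φ : StrongDual ℝ Z, ‖φ‖ = 1 ∧ φ u = 1 ∧ |φ z| = r}

/-- Numerical index of the space with respect to the unit vector `u`. -/
noncomputable def nInd {Z : Type*} [NormedAddCommGroup Z] [NormedSpace ℝ Z] (u : Z) : ℝ :=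
  sInf {r : ℝ | ∃ z : Z, ‖z‖ = 1 ∧ vRad u z = r}

open Set

section DirectionalDerivative

variable {E : Type*} [NormedAddCommGroup E] [NormedSpace ℝ E]

noncomputable def normSlope (u z : E) (t : ℝ) : ℝ := (‖u + t • z‖ - ‖u‖) / t

/-- The right derivative of `t ↦ ‖u + t • z‖` at `0`; the slopes decrease as `t ↓ 0`. -/
noncomputable def normDirDeriv (u z : E) : ℝ := ⨅ t : Ioi (0 : ℝ), normSlope u z t

variable {u z w : E} {s t c : ℝ}

theorem neg_norm_le_normSlope (ht : 0 < t) : -‖z‖ ≤ normSlope u z t := by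
  rw [normSlope, le_div_iff₀ ht]
  have := norm_sub_norm_le u (u + t • z)
  rw [sub_add_cancel_left, norm_neg, norm_smul, Real.norm_of_nonneg ht.le] at this
  linarith

theorem normSlope_le_norm (ht : 0 < t) : normSlope u z t ≤ ‖z‖ := by
  rw [normSlope, div_le_iff₀ ht]
  have := norm_add_le u (t • z)
  rw [norm_smul, Real.norm_of_nonneg ht.le] at this
  linarith

theorem normSlope_mono (hs : 0 < s) (hst : s ≤ t) : normSlope u z s ≤ normSlope u z t := by
  have hconv : ConvexOn ℝ univ fun r : ℝ => ‖u + r • z‖ := by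
    simpa [Function.comp_def, AffineMap.lineMap_apply, add_comm] using
      convexOn_univ_norm.comp_affineMap (AffineMap.lineMap u (u + z) : ℝ →ᵃ[ℝ] E)
  simpa [normSlope] using hconv.secant_mono (mem_univ 0) (mem_univ s) (mem_univ t)
    hs.ne' (hs.trans_le hst).ne' hst

theorem normSlope_smul (hc : c ≠ 0) (t : ℝ) :
    normSlope u (c • z) t = c * normSlope u z (c * t) := by
  rw [normSlope, normSlope, smul_smul, mul_comm t c, mul_div_assoc', mul_div_mul_left _ _ hc]

theorem normSlope_add_le (ht : 0 < t) :
    normSlope u (z + w) t ≤ normSlope u z (2 * t) + normSlope u w (2 * t) := by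
  have h : (2 : ℝ) • (u + t • (z + w)) = (u + (2 * t) • z) + (u + (2 * t) • w) := by module
  have hn := norm_add_le (u + (2 * t) • z) (u + (2 * t) • w)
  rw [← h, norm_smul, Real.norm_two] at hn
  rw [normSlope, normSlope, normSlope, ← add_div, div_le_div_iff₀ ht (by positivity)]
  nlinarith

theorem normDirDeriv_le_normSlope (ht : 0 < t) : normDirDeriv u z ≤ normSlope u z t :=
  ciInf_le ⟨-‖z‖, by rintro _ ⟨r, rfl⟩; exact neg_norm_le_normSlope r.2⟩ (⟨t, ht⟩ : Ioi (0 : ℝ))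

theorem le_normDirDeriv (h : ∀ t, 0 < t → c ≤ normSlope u z t) : c ≤ normDirDeriv u z :=
  le_ciInf fun t => h t t.2

theorem normDirDeriv_le_norm (u z : E) : normDirDeriv u z ≤ ‖z‖ :=
  (normDirDeriv_le_normSlope one_pos).trans (normSlope_le_norm one_pos)

theorem normDirDeriv_zero (u : E) : normDirDeriv u 0 = 0 := by
  simp [normDirDeriv, normSlope]

theorem normDirDeriv_neg_self_le (u : E) : normDirDeriv u (-u) ≤ -‖u‖ :=
  (normDirDeriv_le_normSlope one_pos).trans_eq (by simp [normSlope])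

theorem normDirDeriv_smul (hc : 0 < c) (u z : E) :
    normDirDeriv u (c • z) = c * normDirDeriv u z := by
  apply le_antisymm
  · rw [← div_le_iff₀' hc]
    refine le_normDirDeriv fun t ht => ?_
    have h := normDirDeriv_le_normSlope (u := u) (z := c • z) (div_pos ht hc)
    rwa [normSlope_smul hc.ne', mul_div_cancel₀ _ hc.ne', ← div_le_iff₀' hc] at h
  · refine le_normDirDeriv fun t ht => ?_
    rw [normSlope_smul hc.ne']
    exact mul_le_mul_of_nonneg_left (normDirDeriv_le_normSlope (mul_pos hc ht)) hc.le

theorem normDirDeriv_add_le (u z w : E) :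
    normDirDeriv u (z + w) ≤ normDirDeriv u z + normDirDeriv u w := by
  have key : ∀ s t, 0 < s → 0 < t → normDirDeriv u (z + w) ≤ normSlope u z s + normSlope u w t := by
    intro s t hs ht
    have hr : 0 < min s t / 2 := by positivity
    have h := normSlope_add_le (u := u) (z := z) (w := w) hr
    rw [mul_div_cancel₀ _ two_ne_zero] at h
    calc normDirDeriv u (z + w) ≤ normSlope u (z + w) (min s t / 2) := normDirDeriv_le_normSlope hr
      _ ≤ normSlope u z (min s t) + normSlope u w (min s t) := h
      _ ≤ normSlope u z s + normSlope u w t := add_le_add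
          (normSlope_mono (lt_min hs ht) (min_le_left _ _))
          (normSlope_mono (lt_min hs ht) (min_le_right _ _))
  have hw : ∀ t, 0 < t → normDirDeriv u (z + w) - normSlope u w t ≤ normDirDeriv u z :=
    fun t ht => le_normDirDeriv fun s hs => by linarith [key s t hs ht]
  have hz : normDirDeriv u (z + w) - normDirDeriv u z ≤ normDirDeriv u w :=
    le_normDirDeriv fun t ht => by linarith [hw t ht]
  linarith

theorem normDirDeriv_add_neg_nonneg (u z : E) : 0 ≤ normDirDeriv u z + normDirDeriv u (-z) := by
  simpa [normDirDeriv_zero] using normDirDeriv_add_le u z (-z)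

theorem mul_normDirDeriv_le (u z : E) (c : ℝ) : c * normDirDeriv u z ≤ normDirDeriv u (c • z) := by
  rcases lt_trichotomy c 0 with hc | rfl | hc
  · rw [show c • z = (-c) • -z by rw [smul_neg, neg_smul, neg_neg],
      normDirDeriv_smul (neg_pos.2 hc)]
    nlinarith [normDirDeriv_add_neg_nonneg u z]
  · simp [normDirDeriv_zero]
  · rw [normDirDeriv_smul hc]

theorem normDirDeriv_mono {F : Type*} [NormedAddCommGroup F] [NormedSpace ℝ F] {u' z' : F}
    (hu : ‖u‖ = ‖u'‖) (h : ∀ t : ℝ, 0 < t → ‖u + t • z‖ ≤ ‖u' + t • z'‖) :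
    normDirDeriv u z ≤ normDirDeriv u' z' :=
  le_normDirDeriv fun t ht => (normDirDeriv_le_normSlope ht).trans <| by
    rw [normSlope, normSlope, hu]
    exact div_le_div_of_nonneg_right (sub_le_sub_right (h t ht) _) ht.le

theorem apply_le_normDirDeriv {φ : StrongDual ℝ E} (hφ : ‖φ‖ ≤ 1) (hφu : φ u = ‖u‖) (z : E) :
    φ z ≤ normDirDeriv u z :=
  le_normDirDeriv fun t ht => by
    have h := φ.le_of_opNorm_le hφ (u + t • z)
    rw [one_mul, map_add, map_smul, hφu, smul_eq_mul, Real.norm_eq_abs] at h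
    rw [normSlope, le_div_iff₀ ht]
    linarith [le_abs_self (‖u‖ + t * φ z)]

/-- Hahn–Banach, applied to the sublinear functional `normDirDeriv u`. -/
theorem exists_dual_eq_normDirDeriv (hu : u ≠ 0) (z : E) :
    ∃ φ : StrongDual ℝ E, ‖φ‖ = 1 ∧ φ u = ‖u‖ ∧ φ z = normDirDeriv u z := by
  let f := LinearPMap.mkSpanSingleton' (σ := RingHom.id ℝ) z (normDirDeriv u z) fun c hc => by
    rcases eq_or_ne c 0 with rfl | hc0
    · exact zero_smul _ _
    · rw [smul_eq_zero_iff_right hc0] at hc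
      simp [hc, normDirDeriv_zero]
  have hf : ∀ x : f.domain, f x ≤ normDirDeriv u x := by
    rintro ⟨x, hx⟩
    obtain ⟨c, rfl⟩ := Submodule.mem_span_singleton.1 hx
    rw [LinearPMap.mkSpanSingleton'_apply]
    exact mul_normDirDeriv_le u z c
  obtain ⟨g, hgf, hg⟩ := exists_extension_of_le_sublinear f (normDirDeriv u)
    (fun c hc x => normDirDeriv_smul hc u x) (normDirDeriv_add_le u) hf
  have hg_le : ∀ x, g x ≤ ‖x‖ := fun x => (hg x).trans (normDirDeriv_le_norm u x)
  have hg_abs : ∀ x, ‖g x‖ ≤ 1 * ‖x‖ := fun x => by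
    rw [one_mul, Real.norm_eq_abs, abs_le]
    exact ⟨by linarith [hg_le (-x), map_neg g x, norm_neg x], hg_le x⟩
  let φ : StrongDual ℝ E := g.mkContinuous 1 hg_abs
  have hφg : ∀ x, φ x = g x := fun _ => rfl
  have hφu : φ u = ‖u‖ := by
    rw [hφg]
    exact le_antisymm (hg_le u) (by linarith [hg (-u), map_neg g u, normDirDeriv_neg_self_le u])
  have hφ : ‖φ‖ ≤ 1 := g.mkContinuous_norm_le zero_le_one hg_abs
  refine ⟨φ, le_antisymm hφ ?_, hφu, ?_⟩
  · have h := φ.le_opNorm u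
    rw [hφu, Real.norm_of_nonneg (norm_nonneg u)] at h
    exact (le_mul_iff_one_le_left (norm_pos_iff.2 hu)).1 h
  · rw [hφg]
    exact (hgf ⟨z, Submodule.mem_span_singleton_self z⟩).trans
      (LinearPMap.mkSpanSingleton'_apply_self _ _ _ _)

end DirectionalDerivative

section NumericalRadius

variable {E F : Type*} [NormedAddCommGroup E] [NormedSpace ℝ E]
  [NormedAddCommGroup F] [NormedSpace ℝ F] {u z : E}

theorem vRad_eq_max_normDirDeriv (hu : ‖u‖ = 1) (z : E) :
    vRad u z = max (normDirDeriv u z) (normDirDeriv u (-z)) := by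
  have hu0 : u ≠ 0 := norm_ne_zero_iff.1 (by rw [hu]; exact one_ne_zero)
  have hbdd : BddAbove {r : ℝ | ∃ φ : StrongDual ℝ E, ‖φ‖ = 1 ∧ φ u = 1 ∧ |φ z| = r} := by
    refine ⟨‖z‖, ?_⟩
    rintro _ ⟨φ, hφ, -, rfl⟩
    simpa [hφ] using φ.le_opNorm z
  obtain ⟨φ, hφ, hφu, hφz⟩ := exists_dual_eq_normDirDeriv hu0 z
  obtain ⟨ψ, hψ, hψu, hψz⟩ := exists_dual_eq_normDirDeriv hu0 (-z)
  rw [hu] at hφu hψu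
  apply le_antisymm
  · refine csSup_le ⟨_, φ, hφ, hφu, rfl⟩ ?_
    rintro _ ⟨χ, hχ, hχu, rfl⟩
    have hχu' : χ u = ‖u‖ := hχu.trans hu.symm
    rw [abs_eq_max_neg, ← map_neg]
    exact max_le_max (apply_le_normDirDeriv hχ.le hχu' z) (apply_le_normDirDeriv hχ.le hχu' (-z))
  · refine max_le ?_ ?_
    · rw [← hφz]
      exact (le_abs_self _).trans (le_csSup hbdd ⟨φ, hφ, hφu, rfl⟩)
    · rw [← hψz, map_neg]
      exact (neg_le_abs _).trans (le_csSup hbdd ⟨ψ, hψ, hψu, rfl⟩)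

theorem vRad_nonneg (hu : ‖u‖ = 1) (z : E) : 0 ≤ vRad u z := by
  rw [vRad_eq_max_normDirDeriv hu]
  by_contra! h
  rw [max_lt_iff] at h
  linarith [normDirDeriv_add_neg_nonneg u z]

theorem vRad_smul (hu : ‖u‖ = 1) {c : ℝ} (hc : 0 < c) (z : E) : vRad u (c • z) = c * vRad u z := by
  rw [vRad_eq_max_normDirDeriv hu, vRad_eq_max_normDirDeriv hu, ← smul_neg,
    normDirDeriv_smul hc, normDirDeriv_smul hc, mul_max_of_nonneg _ _ hc.le]

theorem vRad_le_vRad_of_norm_add_smul_le {u' z' : F} (hu : ‖u‖ = 1) (hu' : ‖u'‖ = 1)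
    (h : ∀ t : ℝ, ‖u + t • z‖ ≤ ‖u' + t • z'‖) : vRad u z ≤ vRad u' z' := by
  rw [vRad_eq_max_normDirDeriv hu, vRad_eq_max_normDirDeriv hu']
  refine max_le_max (normDirDeriv_mono (hu.trans hu'.symm) fun t _ => h t)
    (normDirDeriv_mono (hu.trans hu'.symm) fun t _ => ?_)
  simpa only [smul_neg, ← neg_smul] using h (-t)

theorem vRad_map (f : E →ₗᵢ[ℝ] F) (hu : ‖u‖ = 1) (z : E) : vRad (f u) (f z) = vRad u z := by
  have h : ∀ t : ℝ, ‖f u + t • f z‖ = ‖u + t • z‖ := fun t => by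
    rw [← map_smul, ← map_add, f.norm_map]
  exact le_antisymm (vRad_le_vRad_of_norm_add_smul_le (by rwa [f.norm_map]) hu fun t => (h t).le)
    (vRad_le_vRad_of_norm_add_smul_le hu (by rwa [f.norm_map]) fun t => (h t).ge)

theorem normDirDeriv_prod_mk_zero {u₁ : E} {u₂ : F} (hu : ‖u₂‖ = ‖u₁‖) (z : E) :
    normDirDeriv (u₁, u₂) (z, 0) = max (normDirDeriv u₁ z) 0 := by
  have hslope : ∀ t : ℝ, 0 < t → normSlope (u₁, u₂) (z, 0) t = max (normSlope u₁ z t) 0 := by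
    intro t ht
    simp only [normSlope, Prod.smul_mk, smul_zero, Prod.mk_add_mk, add_zero, Prod.norm_def, hu,
      max_self]
    rw [← max_sub_sub_right, sub_self, ← zero_div t, max_div_div_right ht.le, zero_div]
  apply le_antisymm
  · rcases le_or_gt (normDirDeriv (u₁, u₂) (z, 0)) 0 with h | h
    · exact le_max_of_le_right h
    refine le_max_of_le_left (le_normDirDeriv fun t ht => ?_)
    have := (normDirDeriv_le_normSlope ht).trans_eq (hslope t ht)
    exact (le_max_iff.1 this).resolve_right h.not_ge
  · exact le_normDirDeriv fun t ht =>
      (hslope t ht).symm ▸ max_le_max_right 0 (normDirDeriv_le_normSlope ht)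

theorem vRad_prod_mk_zero {u₁ : E} {u₂ : F} (hu₁ : ‖u₁‖ = 1) (hu₂ : ‖u₂‖ = 1) (z : E) :
    vRad (u₁, u₂) (z, 0) = vRad u₁ z := by
  rw [vRad_eq_max_normDirDeriv (by simp [Prod.norm_def, hu₁, hu₂]), Prod.neg_mk, neg_zero,
    normDirDeriv_prod_mk_zero (hu₂.trans hu₁.symm), normDirDeriv_prod_mk_zero (hu₂.trans hu₁.symm),
    max_max_max_comm, max_self, ← vRad_eq_max_normDirDeriv hu₁, max_eq_left (vRad_nonneg hu₁ z)]

theorem vRad_prod_zero_mk {u₁ : E} {u₂ : F} (hu₁ : ‖u₁‖ = 1) (hu₂ : ‖u₂‖ = 1) (z : F) :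
    vRad (u₁, u₂) (0, z) = vRad u₂ z := by
  rw [← vRad_map (LinearIsometryEquiv.prodComm ℝ E F).toLinearIsometry
    (by simp [Prod.norm_def, hu₁, hu₂])]
  exact vRad_prod_mk_zero hu₂ hu₁ z

theorem le_nInd (hu : ‖u‖ = 1) {c : ℝ} (h : ∀ z : E, ‖z‖ = 1 → c ≤ vRad u z) : c ≤ nInd u :=
  le_csInf ⟨_, u, hu, rfl⟩ fun _ ⟨z, hz, hr⟩ => hr ▸ h z hz

theorem nInd_le_vRad (hu : ‖u‖ = 1) (hz : ‖z‖ = 1) : nInd u ≤ vRad u z :=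
  csInf_le ⟨0, fun _ ⟨w, _, hr⟩ => hr ▸ vRad_nonneg hu w⟩ ⟨z, hz, rfl⟩

theorem nInd_nonneg (hu : ‖u‖ = 1) : 0 ≤ nInd u :=
  le_nInd hu fun z _ => vRad_nonneg hu z

theorem nInd_mul_norm_le_vRad (hu : ‖u‖ = 1) (z : E) : nInd u * ‖z‖ ≤ vRad u z := by
  rcases eq_or_ne z 0 with rfl | hz
  · simpa using vRad_nonneg hu 0
  have hpos : 0 < ‖z‖ := norm_pos_iff.2 hz
  have h := nInd_le_vRad (z := ‖z‖⁻¹ • z) hu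
    (by rw [norm_smul, norm_inv, norm_norm, inv_mul_cancel₀ hpos.ne'])
  rwa [vRad_smul hu (inv_pos.2 hpos), ← div_eq_inv_mul, le_div_iff₀ hpos] at h

end NumericalRadius

section Operators

open ContinuousLinearMap

theorem ContinuousLinearMap.norm_comp_comp_le {X Y Z W : Type*} [NormedAddCommGroup X]
    [NormedSpace ℝ X] [NormedAddCommGroup Y] [NormedSpace ℝ Y] [NormedAddCommGroup Z]
    [NormedSpace ℝ Z] [NormedAddCommGroup W] [NormedSpace ℝ W] {p : Z →L[ℝ] W} {j : X →L[ℝ] Y}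
    (hp : ‖p‖ ≤ 1) (hj : ‖j‖ ≤ 1) (A : Y →L[ℝ] Z) : ‖p ∘L A ∘L j‖ ≤ ‖A‖ :=
  calc ‖p ∘L A ∘L j‖ ≤ ‖p‖ * (‖A‖ * ‖j‖) :=
        (opNorm_comp_le _ _).trans (by gcongr; exact opNorm_comp_le _ _)
    _ ≤ 1 * (‖A‖ * 1) := by gcongr
    _ = ‖A‖ := by ring

variable {X₁ X₂ Y₁ Y₂ : Type*} [NormedAddCommGroup X₁] [NormedSpace ℝ X₁]
  [NormedAddCommGroup X₂] [NormedSpace ℝ X₂] [NormedAddCommGroup Y₁] [NormedSpace ℝ Y₁]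
  [NormedAddCommGroup Y₂] [NormedSpace ℝ Y₂]

theorem ContinuousLinearMap.norm_prodMap (f : X₁ →L[ℝ] Y₁) (g : X₂ →L[ℝ] Y₂) :
    ‖f.prodMap g‖ = ‖(f, g)‖ := by
  refine le_antisymm (opNorm_le_bound _ (norm_nonneg _) fun x => ?_) (max_le ?_ ?_)
  · rw [coe_prodMap', Prod.map_apply, Prod.norm_def, Prod.norm_def (f, g),
      max_mul_of_nonneg _ _ (norm_nonneg x)]
    exact max_le_max ((f.le_opNorm _).trans (by gcongr; exact _root_.norm_fst_le x))
      ((g.le_opNorm _).trans (by gcongr; exact _root_.norm_snd_le x))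
  · calc ‖f‖ = ‖fst ℝ Y₁ Y₂ ∘L f.prodMap g ∘L inl ℝ X₁ X₂‖ := by congr 1
      _ ≤ ‖f.prodMap g‖ := norm_comp_comp_le (norm_fst_le ℝ Y₁ Y₂) (norm_inl_le_one ℝ X₁ X₂) _
  · calc ‖g‖ = ‖snd ℝ Y₁ Y₂ ∘L f.prodMap g ∘L inr ℝ X₁ X₂‖ := by congr 1
      _ ≤ ‖f.prodMap g‖ := norm_comp_comp_le (norm_snd_le ℝ Y₁ Y₂) (norm_inr_le_one ℝ X₁ X₂) _

noncomputable def ContinuousLinearMap.prodMapₗᵢ :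
    (X₁ →L[ℝ] Y₁) × (X₂ →L[ℝ] Y₂) →ₗᵢ[ℝ] (X₁ × X₂ →L[ℝ] Y₁ × Y₂) :=
  ⟨(prodMapL ℝ X₁ Y₁ X₂ Y₂).toLinearMap, fun p => norm_prodMap p.1 p.2⟩

variable {G₁ : X₁ →L[ℝ] Y₁} {G₂ : X₂ →L[ℝ] Y₂}

theorem norm_prodMap_eq_one (hG₁ : ‖G₁‖ = 1) (hG₂ : ‖G₂‖ = 1) : ‖G₁.prodMap G₂‖ = 1 := by
  simp [norm_prodMap, Prod.norm_def, hG₁, hG₂]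

theorem vRad_prodMap_zero (hG₁ : ‖G₁‖ = 1) (hG₂ : ‖G₂‖ = 1) (z : X₁ →L[ℝ] Y₁) :
    vRad (G₁.prodMap G₂) (z.prodMap 0) = vRad G₁ z :=
  (vRad_map prodMapₗᵢ (by simp [Prod.norm_def, hG₁, hG₂]) (z, 0)).trans
    (vRad_prod_mk_zero hG₁ hG₂ z)

theorem vRad_zero_prodMap (hG₁ : ‖G₁‖ = 1) (hG₂ : ‖G₂‖ = 1) (z : X₂ →L[ℝ] Y₂) :
    vRad (G₁.prodMap G₂) ((0 : X₁ →L[ℝ] Y₁).prodMap z) = vRad G₂ z :=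
  (vRad_map prodMapₗᵢ (by simp [Prod.norm_def, hG₁, hG₂]) (0, z)).trans
    (vRad_prod_zero_mk hG₁ hG₂ z)

theorem nInd_prodMap_le_left (hG₁ : ‖G₁‖ = 1) (hG₂ : ‖G₂‖ = 1) :
    nInd (G₁.prodMap G₂) ≤ nInd G₁ :=
  le_nInd hG₁ fun z hz => vRad_prodMap_zero hG₁ hG₂ z ▸
    nInd_le_vRad (norm_prodMap_eq_one hG₁ hG₂)
      (by simp [norm_prodMap, Prod.norm_def, hz])

theorem nInd_prodMap_le_right (hG₁ : ‖G₁‖ = 1) (hG₂ : ‖G₂‖ = 1) :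
    nInd (G₁.prodMap G₂) ≤ nInd G₂ :=
  le_nInd hG₂ fun z hz => vRad_zero_prodMap hG₁ hG₂ z ▸
    nInd_le_vRad (norm_prodMap_eq_one hG₁ hG₂)
      (by simp [norm_prodMap, Prod.norm_def, hz])

end Operators

section LowerBound

open ContinuousLinearMap Metric

theorem ConvexOn.exists_norm_eq_one_le {X : Type*} [NormedAddCommGroup X] [NormedSpace ℝ X]
    [Nontrivial X] {f : X → ℝ} (hf : ConvexOn ℝ univ f) {x : X} (hx : ‖x‖ ≤ 1) :
    ∃ e, ‖e‖ = 1 ∧ f x ≤ f e := by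
  have hmem : x ∈ convexHull ℝ (sphere (0 : X) 1) := by
    rw [convexHull_sphere_eq_closedBall 0 zero_le_one]
    simpa using hx
  obtain ⟨e, he, hxe⟩ := hf.exists_ge_of_mem_convexHull (subset_univ _) hmem
  exact ⟨e, by simpa using he, hxe⟩

theorem exists_norm_le_one_apply_eq {X V : Type*} [NormedAddCommGroup X] [NormedSpace ℝ X]
    [NormedAddCommGroup V] [NormedSpace ℝ V] {e : X} (he : ‖e‖ = 1) {v : V} (hv : ‖v‖ ≤ 1) :
    ∃ k : X →L[ℝ] V, ‖k‖ ≤ 1 ∧ k e = v := by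
  obtain ⟨f, hf, hfe⟩ := exists_dual_vector ℝ e (by rw [he]; exact one_ne_zero)
  refine ⟨f.smulRight v, by rwa [norm_smulRight_apply, hf, one_mul], ?_⟩
  simp [hfe, he]

theorem ContinuousLinearMap.nontrivial_of_ne_zero {X Y : Type*} [NormedAddCommGroup X]
    [NormedSpace ℝ X] [NormedAddCommGroup Y] [NormedSpace ℝ Y] {G : X →L[ℝ] Y} (hG : G ≠ 0) :
    Nontrivial X := by
  rcases subsingleton_or_nontrivial X with hX | hX
  · exact absurd (Subsingleton.elim G 0) hG
  · exact hX

variable {X Y X' Y' : Type*} [NormedAddCommGroup X] [NormedSpace ℝ X]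
  [NormedAddCommGroup Y] [NormedSpace ℝ Y] [NormedAddCommGroup X'] [NormedSpace ℝ X']
  [NormedAddCommGroup Y'] [NormedSpace ℝ Y']

theorem vRad_comp_comp_le {G : X →L[ℝ] Y} {G' : X' →L[ℝ] Y'} (hG : ‖G‖ = 1) (hG' : ‖G'‖ = 1)
    {j : X' →L[ℝ] X} {p : Y →L[ℝ] Y'} (hj : ‖j‖ ≤ 1) (hp : ‖p‖ ≤ 1) (hGj : p ∘L G ∘L j = G')
    (T : X →L[ℝ] Y) : vRad G' (p ∘L T ∘L j) ≤ vRad G T :=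
  vRad_le_vRad_of_norm_add_smul_le hG' hG fun t => by
    have h : G' + t • (p ∘L T ∘L j) = p ∘L (G + t • T) ∘L j := by
      rw [← hGj, add_comp, smul_comp, comp_add, comp_smul]
    rw [h]
    exact norm_comp_comp_le hp hj _

theorem nInd_mul_norm_apply_le_vRad {G : X →L[ℝ] Y} {G' : X' →L[ℝ] Y'} (hG : ‖G‖ = 1)
    (hG' : ‖G'‖ = 1) {j : X' →L[ℝ] X} {p : Y →L[ℝ] Y'} (hj : ‖j‖ ≤ 1) (hp : ‖p‖ ≤ 1)
    (hGj : p ∘L G ∘L j = G') (T : X →L[ℝ] Y) {e : X'} (he : ‖e‖ ≤ 1) :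
    nInd G' * ‖p (T (j e))‖ ≤ vRad G T :=
  calc nInd G' * ‖p (T (j e))‖ ≤ nInd G' * ‖p ∘L T ∘L j‖ := by
        gcongr
        · exact nInd_nonneg hG'
        · simpa using (p ∘L T ∘L j).le_opNorm_of_le he
    _ ≤ vRad G' (p ∘L T ∘L j) := nInd_mul_norm_le_vRad hG' _
    _ ≤ vRad G T := vRad_comp_comp_le hG hG' hj hp hGj T

variable {X₁ X₂ Y₁ Y₂ : Type*} [NormedAddCommGroup X₁] [NormedSpace ℝ X₁]
  [NormedAddCommGroup X₂] [NormedSpace ℝ X₂] [NormedAddCommGroup Y₁] [NormedSpace ℝ Y₁]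
  [NormedAddCommGroup Y₂] [NormedSpace ℝ Y₂] {G₁ : X₁ →L[ℝ] Y₁} {G₂ : X₂ →L[ℝ] Y₂}

theorem nInd_mul_norm_fst_le_vRad (hG₁ : ‖G₁‖ = 1) (hG₂ : ‖G₂‖ = 1)
    (T : X₁ × X₂ →L[ℝ] Y₁ × Y₂) {x : X₁ × X₂} (hx : ‖x‖ ≤ 1) :
    nInd G₁ * ‖(T x).1‖ ≤ vRad (G₁.prodMap G₂) T := by
  have := nontrivial_of_ne_zero (G := G₁) (by rintro rfl; simp at hG₁)
  have hconv : ConvexOn ℝ univ fun w => ‖(T (w, x.2)).1‖ :=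
    convexOn_univ_norm.comp_affineMap ((fst ℝ Y₁ Y₂ ∘L T).toLinearMap.toAffineMap.comp
      ((AffineMap.id ℝ X₁).prod (AffineMap.const ℝ X₁ x.2)))
  obtain ⟨e, he, hxe⟩ := hconv.exists_norm_eq_one_le ((norm_fst_le x).trans hx)
  obtain ⟨k, hk, hke⟩ := exists_norm_le_one_apply_eq he ((norm_snd_le x).trans hx)
  set j := (ContinuousLinearMap.id ℝ X₁).prod k
  have hj : ‖j‖ ≤ 1 := by
    rw [opNorm_prod, Prod.norm_def]
    exact max_le norm_id_le hk
  have hGj : fst ℝ Y₁ Y₂ ∘L G₁.prodMap G₂ ∘L j = G₁ := by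
    ext; simp [j]
  have hxe' : ‖(T x).1‖ ≤ ‖fst ℝ Y₁ Y₂ (T (j e))‖ := by
    simpa [j, hke] using hxe
  exact (mul_le_mul_of_nonneg_left hxe' (nInd_nonneg hG₁)).trans <|
    nInd_mul_norm_apply_le_vRad (G := G₁.prodMap G₂) (p := fst ℝ Y₁ Y₂) (j := j)
      (norm_prodMap_eq_one hG₁ hG₂) hG₁ hj (norm_fst_le ℝ Y₁ Y₂) hGj T he.le

theorem nInd_mul_norm_snd_le_vRad (hG₁ : ‖G₁‖ = 1) (hG₂ : ‖G₂‖ = 1)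
    (T : X₁ × X₂ →L[ℝ] Y₁ × Y₂) {x : X₁ × X₂} (hx : ‖x‖ ≤ 1) :
    nInd G₂ * ‖(T x).2‖ ≤ vRad (G₁.prodMap G₂) T := by
  have := nontrivial_of_ne_zero (G := G₂) (by rintro rfl; simp at hG₂)
  have hconv : ConvexOn ℝ univ fun w => ‖(T (x.1, w)).2‖ :=
    convexOn_univ_norm.comp_affineMap ((snd ℝ Y₁ Y₂ ∘L T).toLinearMap.toAffineMap.comp
      ((AffineMap.const ℝ X₂ x.1).prod (AffineMap.id ℝ X₂)))
  obtain ⟨e, he, hxe⟩ := hconv.exists_norm_eq_one_le ((norm_snd_le x).trans hx)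
  obtain ⟨k, hk, hke⟩ := exists_norm_le_one_apply_eq he ((norm_fst_le x).trans hx)
  set j := k.prod (ContinuousLinearMap.id ℝ X₂)
  have hj : ‖j‖ ≤ 1 := by
    rw [opNorm_prod, Prod.norm_def]
    exact max_le hk norm_id_le
  have hGj : snd ℝ Y₁ Y₂ ∘L G₁.prodMap G₂ ∘L j = G₂ := by
    ext; simp [j]
  have hxe' : ‖(T x).2‖ ≤ ‖snd ℝ Y₁ Y₂ (T (j e))‖ := by
    simpa [j, hke] using hxe
  exact (mul_le_mul_of_nonneg_left hxe' (nInd_nonneg hG₂)).trans <|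
    nInd_mul_norm_apply_le_vRad (G := G₁.prodMap G₂) (p := snd ℝ Y₁ Y₂) (j := j)
      (norm_prodMap_eq_one hG₁ hG₂) hG₂ hj (norm_snd_le ℝ Y₁ Y₂) hGj T he.le

theorem min_nInd_mul_norm_le_vRad (hG₁ : ‖G₁‖ = 1) (hG₂ : ‖G₂‖ = 1)
    (T : X₁ × X₂ →L[ℝ] Y₁ × Y₂) : min (nInd G₁) (nInd G₂) * ‖T‖ ≤ vRad (G₁.prodMap G₂) T := by
  have hv := vRad_nonneg (norm_prodMap_eq_one hG₁ hG₂) T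
  rcases (le_min (nInd_nonneg hG₁) (nInd_nonneg hG₂)).eq_or_lt with h | h
  · rwa [← h, zero_mul]
  rw [mul_comm, ← le_div_iff₀ h]
  refine opNorm_le_of_unit_norm (div_nonneg hv h.le) fun x hx => ?_
  rw [le_div_iff₀ h, mul_comm, Prod.norm_def, mul_max_of_nonneg _ _ h.le]
  exact max_le
    ((mul_le_mul_of_nonneg_right (min_le_left _ _) (norm_nonneg _)).trans
      (nInd_mul_norm_fst_le_vRad hG₁ hG₂ T hx.le))
    ((mul_le_mul_of_nonneg_right (min_le_right _ _) (norm_nonneg _)).trans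
      (nInd_mul_norm_snd_le_vRad hG₁ hG₂ T hx.le))

end LowerBound

theorem stmt19_general {X₁ X₂ Y₁ Y₂ : Type*}
    [NormedAddCommGroup X₁] [NormedSpace ℝ X₁]
    [NormedAddCommGroup X₂] [NormedSpace ℝ X₂]
    [NormedAddCommGroup Y₁] [NormedSpace ℝ Y₁]
    [NormedAddCommGroup Y₂] [NormedSpace ℝ Y₂]
    (G₁ : X₁ →L[ℝ] Y₁) (hG₁ : ‖G₁‖ = 1) (G₂ : X₂ →L[ℝ] Y₂) (hG₂ : ‖G₂‖ = 1) :
    nInd (G₁.prodMap G₂) = min (nInd G₁) (nInd G₂) :=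
  le_antisymm (le_min (nInd_prodMap_le_left hG₁ hG₂) (nInd_prodMap_le_right hG₁ hG₂))
    (le_nInd (norm_prodMap_eq_one hG₁ hG₂) fun T hT => by
      simpa [hT] using min_nInd_mul_norm_le_vRad hG₁ hG₂ T)

theorem stmt19 {X₁ X₂ Y₁ Y₂ : Type*}
    [NormedAddCommGroup X₁] [NormedSpace ℝ X₁] [CompleteSpace X₁]
    [NormedAddCommGroup X₂] [NormedSpace ℝ X₂] [CompleteSpace X₂]
    [NormedAddCommGroup Y₁] [NormedSpace ℝ Y₁] [CompleteSpace Y₁]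
    [NormedAddCommGroup Y₂] [NormedSpace ℝ Y₂] [CompleteSpace Y₂]
    (G₁ : X₁ →L[ℝ] Y₁) (hG₁ : ‖G₁‖ = 1) (G₂ : X₂ →L[ℝ] Y₂) (hG₂ : ‖G₂‖ = 1) :
    nInd (G₁.prodMap G₂) = min (nInd G₁) (nInd G₂) :=
  stmt19_general G₁ hG₁ G₂ hG₂
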